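/- Let n be a positive integer, let r, κ ∈ ℝⁿ have nonnegative entries, let E ∈ ℝ^{n×n}, and define the profit P(π) = Σ_{i=1}^n (r_i·exp((Eπ)_i + π_i) − κ_i·exp((Eπ)_i)). Fix π̂ ∈ ℝⁿ and δ^max ∈ ℝⁿ such that, writing δ̂ = Eπ̂ and b_i = δ^max_i − δ̂_i, we have b_i > 0 for all i; set β_i = (exp(b_i) − b_i − 1)/b_i². Define the QMM surrogate Q(π) = Σ_{i=1}^n (r_i·exp(δ̂_i + π̂_i)·(1 + (Eπ)_i + π_i − δ̂_i − π̂_i) − κ_i·exp(δ̂_i)·(1 + ((Eπ)_i − δ̂_i) + β_i·((Eπ)_i − δ̂_i)²)). Then Q(π) ≤ P(π) for every π ∈ ℝⁿ with Eπ ≤ δ^max componentwise, and Q(π̂) = P(π̂). -/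

import Mathlib

/-! The revenue terms are convex in `π`, so their tangent-line linearizations lie below them.
For the cost terms, `exp t = 1 + t + t² ∫₀¹ (1 - s) e^{st} ds` (Taylor with integral remainder), and the
integral is monotone in `t`; at `t = b` it equals `β = (eᵇ - b - 1)/b²`, so
`exp t ≤ 1 + t + β t²` whenever `t ≤ b`. Both bounds are equalities at `π = π̂`. -/

section

open Real intervalIntegral

lemma sq_mul_integral_one_sub_mul_exp (t : ℝ) :
    t ^ 2 * ∫ s in (0 : ℝ)..1, (1 - s) * exp (s * t) = exp t - t - 1 := by
  -- `s ↦ (1 - s) t e^{st} + e^{st}` is an antiderivative of `(1 - s) t² e^{st}`.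
  have hderiv : ∀ s ∈ Set.uIcc (0 : ℝ) 1,
      HasDerivAt (fun s : ℝ => (1 - s) * t * exp (s * t) + exp (s * t))
        (t ^ 2 * ((1 - s) * exp (s * t))) s := by
    intro s _
    have hexp : HasDerivAt (fun s : ℝ => exp (s * t)) (exp (s * t) * t) s :=
      ((hasDerivAt_id s).mul_const t).exp.congr_deriv (by simp)
    exact ((((hasDerivAt_id' s).const_sub 1).mul_const t).mul hexp).add hexp |>.congr_deriv
      (by ring)
  rw [← integral_const_mul, integral_eq_sub_of_hasDerivAt hderiv
    (Continuous.intervalIntegrable (by fun_prop) _ _)]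
  simp only [sub_self, zero_mul, one_mul, zero_add, sub_zero, exp_zero, mul_one]
  ring

lemma exp_le_one_add_add_mul_sq {b t : ℝ} (hb : b ≠ 0) (htb : t ≤ b) :
    exp t ≤ 1 + t + (exp b - b - 1) / b ^ 2 * t ^ 2 := by
  have hmono : ∫ s in (0 : ℝ)..1, (1 - s) * exp (s * t)
      ≤ ∫ s in (0 : ℝ)..1, (1 - s) * exp (s * b) := by
    refine integral_mono_on zero_le_one (Continuous.intervalIntegrable (by fun_prop) _ _)
      (Continuous.intervalIntegrable (by fun_prop) _ _) fun s hs => ?_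
    have hexp : exp (s * t) ≤ exp (s * b) :=
      exp_le_exp.2 (mul_le_mul_of_nonneg_left htb hs.1)
    exact mul_le_mul_of_nonneg_left hexp (by linarith [hs.2])
  have hβ : (exp b - b - 1) / b ^ 2 = ∫ s in (0 : ℝ)..1, (1 - s) * exp (s * b) := by
    rw [← sq_mul_integral_one_sub_mul_exp b]
    field_simp
  rw [hβ]
  nlinarith [sq_mul_integral_one_sub_mul_exp t, sq_nonneg t]

lemma mul_exp_mul_one_add_sub_le {r : ℝ} (hr : 0 ≤ r) (a x : ℝ) :
    r * exp a * (1 + x - a) ≤ r * exp x := by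
  have htangent : exp a * (1 + (x - a)) ≤ exp a * exp (x - a) :=
    mul_le_mul_of_nonneg_left (by linarith [add_one_le_exp (x - a)]) (exp_pos a).le
  rw [← exp_add, add_sub_cancel] at htangent
  calc r * exp a * (1 + x - a) = r * (exp a * (1 + (x - a))) := by ring
    _ ≤ r * exp x := mul_le_mul_of_nonneg_left htangent hr

lemma mul_exp_le_quadratic_minorizer {κ b δ δhat : ℝ} (hκ : 0 ≤ κ) (hb : b ≠ 0)
    (hδ : δ - δhat ≤ b) :
    κ * exp δ ≤ κ * exp δhat *
      (1 + (δ - δhat) + (exp b - b - 1) / b ^ 2 * (δ - δhat) ^ 2) := by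
  have hshift : exp δhat * exp (δ - δhat) ≤
      exp δhat * (1 + (δ - δhat) + (exp b - b - 1) / b ^ 2 * (δ - δhat) ^ 2) :=
    mul_le_mul_of_nonneg_left (exp_le_one_add_add_mul_sq hb hδ) (exp_pos δhat).le
  rw [← exp_add, add_sub_cancel] at hshift
  rw [mul_assoc]
  exact mul_le_mul_of_nonneg_left hshift hκ

end

theorem qmm_surrogate_minorizes_general
    (n : ℕ) (r κ : Fin n → ℝ)
    (hr : ∀ i, 0 ≤ r i) (hκ : ∀ i, 0 ≤ κ i)
    (E : Matrix (Fin n) (Fin n) ℝ)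
    (P : (Fin n → ℝ) → ℝ)
    (hP : ∀ π : Fin n → ℝ,
      P π = ∑ i, (r i * Real.exp (E.mulVec π i + π i)
                    - κ i * Real.exp (E.mulVec π i)))
    (πhat δmax : Fin n → ℝ)
    (b : Fin n → ℝ) (hb : ∀ i, b i = δmax i - E.mulVec πhat i)
    (hbpos : ∀ i, 0 < b i)
    (β : Fin n → ℝ) (hβ : ∀ i, β i = (Real.exp (b i) - b i - 1) / (b i) ^ 2)
    (Q : (Fin n → ℝ) → ℝ)
    (hQ : ∀ π : Fin n → ℝ,
      Q π = ∑ i, (r i * Real.exp (E.mulVec πhat i + πhat i) *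
                    (1 + E.mulVec π i + π i - E.mulVec πhat i - πhat i)
                  - κ i * Real.exp (E.mulVec πhat i) *
                    (1 + (E.mulVec π i - E.mulVec πhat i)
                       + β i * (E.mulVec π i - E.mulVec πhat i) ^ 2))) :
    (∀ π : Fin n → ℝ, (∀ i, E.mulVec π i ≤ δmax i) → Q π ≤ P π) ∧
      Q πhat = P πhat := by
  refine ⟨fun π hπ => ?_, ?_⟩
  · rw [hP, hQ]
    refine Finset.sum_le_sum fun i _ => ?_
    have hrevenue := mul_exp_mul_one_add_sub_le (hr i)
      (E.mulVec πhat i + πhat i) (E.mulVec π i + π i)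
    have hcost := mul_exp_le_quadratic_minorizer (hκ i) (hbpos i).ne'
      (show E.mulVec π i - E.mulVec πhat i ≤ b i by linarith [hb i, hπ i])
    rw [← hβ i] at hcost
    linarith
  · rw [hP, hQ]
    refine Finset.sum_congr rfl fun i _ => ?_
    ring_nf

/-- The QMM surrogate (linearized revenue terms and quadratic minorizers of the
concave cost terms) minorizes the profit on `{π : Eπ ≤ δmax}` and is tight at
the current iterate `π̂`. -/
theorem qmm_surrogate_minorizes
    (n : ℕ) (hn : 0 < n) (r κ : Fin n → ℝ)
    (hr : ∀ i, 0 ≤ r i) (hκ : ∀ i, 0 ≤ κ i)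
    (E : Matrix (Fin n) (Fin n) ℝ)
    (P : (Fin n → ℝ) → ℝ)
    (hP : ∀ π : Fin n → ℝ,
      P π = ∑ i, (r i * Real.exp (E.mulVec π i + π i)
                    - κ i * Real.exp (E.mulVec π i)))
    (πhat δmax : Fin n → ℝ)
    (b : Fin n → ℝ) (hb : ∀ i, b i = δmax i - E.mulVec πhat i)
    (hbpos : ∀ i, 0 < b i)
    (β : Fin n → ℝ) (hβ : ∀ i, β i = (Real.exp (b i) - b i - 1) / (b i) ^ 2)
    (Q : (Fin n → ℝ) → ℝ)
    (hQ : ∀ π : Fin n → ℝ,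
      Q π = ∑ i, (r i * Real.exp (E.mulVec πhat i + πhat i) *
                    (1 + E.mulVec π i + π i - E.mulVec πhat i - πhat i)
                  - κ i * Real.exp (E.mulVec πhat i) *
                    (1 + (E.mulVec π i - E.mulVec πhat i)
                       + β i * (E.mulVec π i - E.mulVec πhat i) ^ 2))) :
    (∀ π : Fin n → ℝ, (∀ i, E.mulVec π i ≤ δmax i) → Q π ≤ P π) ∧
      Q πhat = P πhat :=
  qmm_surrogate_minorizes_general n r κ hr hκ E P hP πhat δmax b hb hbpos β hβ Q hQ
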